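/- Suppose g₁ > 1, g₂ > r₂, d₃ + g₃ > 0, and a₃₁k₃ ≥ r₃ with all parameters a₁₂, a₁₃, a₂₁, a₃₁, r₂, r₃, k₃, d₃ positive. Then with b₁₁ = 1/(2(g₁-1)), b₂₂ = 1/(2(g₂-r₂)), b₃₃ = 1/(2(g₃+d₃)) and V₀(x) = b₁₁x₁² + b₂₂x₂² + b₃₃x₃², the derivative of V₀ along the flow, ∇V₀(x)·F(x), is nonpositive for all x with x₁, x₂, x₃ ≥ 0, and strictly negative whenever additionally x ≠ 0. -/
import Mathlib


/-- the derivative of V₀ along the flow of the tumor-growth system is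
nonpositive on the nonnegative orthant and strictly negative away from the origin. -/
theorem V0_derivative_along_flow
    (a₁₂ a₁₃ a₂₁ a₃₁ r₂ r₃ k₃ d₃ g₁ g₂ g₃ : ℝ)
    (ha₁₂ : 0 < a₁₂) (ha₁₃ : 0 < a₁₃) (ha₂₁ : 0 < a₂₁) (ha₃₁ : 0 < a₃₁)
    (hr₂ : 0 < r₂) (hr₃ : 0 < r₃) (hk₃ : 0 < k₃) (hd₃ : 0 < d₃)
    (h₁ : 1 < g₁) (h₂ : r₂ < g₂) (h₃ : 0 < d₃ + g₃) (hak : r₃ ≤ a₃₁ * k₃)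
    (b₁₁ b₂₂ b₃₃ : ℝ)
    (hb₁₁ : b₁₁ = 1 / (2 * (g₁ - 1)))
    (hb₂₂ : b₂₂ = 1 / (2 * (g₂ - r₂)))
    (hb₃₃ : b₃₃ = 1 / (2 * (g₃ + d₃)))
    (F₁ F₂ F₃ D : ℝ → ℝ → ℝ → ℝ)
    (hF₁ : ∀ x₁ x₂ x₃, F₁ x₁ x₂ x₃ =
      x₁ * (1 - x₁) - a₁₂ * x₁ * x₂ - a₁₃ * x₁ * x₃ - g₁ * x₁)
    (hF₂ : ∀ x₁ x₂ x₃, F₂ x₁ x₂ x₃ =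
      r₂ * x₂ * (1 - x₂) - a₂₁ * x₁ * x₂ - g₂ * x₂)
    (hF₃ : ∀ x₁ x₂ x₃, F₃ x₁ x₂ x₃ =
      r₃ * x₁ * x₃ / (x₁ + k₃) - a₃₁ * x₁ * x₃ - d₃ * x₃ - g₃ * x₃)
    (hD : ∀ x₁ x₂ x₃, D x₁ x₂ x₃ =
      2 * b₁₁ * x₁ * F₁ x₁ x₂ x₃ + 2 * b₂₂ * x₂ * F₂ x₁ x₂ x₃ +
        2 * b₃₃ * x₃ * F₃ x₁ x₂ x₃) :
    ∀ x₁ x₂ x₃ : ℝ, 0 ≤ x₁ → 0 ≤ x₂ → 0 ≤ x₃ →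
      D x₁ x₂ x₃ ≤ 0 ∧ (¬(x₁ = 0 ∧ x₂ = 0 ∧ x₃ = 0) → D x₁ x₂ x₃ < 0) := by
  intro x₁ x₂ x₃ hx₁ hx₂ hx₃
  have hg1 : 0 < g₁ - 1 := by linarith
  have hg2 : 0 < g₂ - r₂ := by linarith
  have hg3 : 0 < g₃ + d₃ := by linarith
  have hb1 : 0 < b₁₁ := by rw [hb₁₁]; positivity
  have hb2 : 0 < b₂₂ := by rw [hb₂₂]; positivity
  have hb3 : 0 < b₃₃ := by rw [hb₃₃]; positivity
  have e1 : b₁₁ * (2 * (g₁ - 1)) = 1 := by rw [hb₁₁]; field_simp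
  have e2 : b₂₂ * (2 * (g₂ - r₂)) = 1 := by rw [hb₂₂]; field_simp
  have e3 : b₃₃ * (2 * (g₃ + d₃)) = 1 := by rw [hb₃₃]; field_simp
  have hden : 0 < x₁ + k₃ := by linarith
  have hq : r₃ * x₁ * x₃ / (x₁ + k₃) ≤ a₃₁ * x₁ * x₃ := by
    rw [div_le_iff₀ hden]
    nlinarith [mul_nonneg hx₁ hx₃, mul_nonneg (mul_nonneg hx₁ hx₁) hx₃,
      mul_nonneg (mul_nonneg hx₁ hx₃) (le_of_lt ha₃₁)]
  have t1 : 2 * b₁₁ * x₁ * F₁ x₁ x₂ x₃ ≤ -x₁ ^ 2 := by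
    rw [hF₁]
    nlinarith [mul_nonneg (mul_nonneg hb1.le (mul_nonneg hx₁ hx₁)) hx₁,
      mul_nonneg (mul_nonneg hb1.le (mul_nonneg hx₁ hx₁)) hx₂,
      mul_nonneg (mul_nonneg hb1.le (mul_nonneg hx₁ hx₁)) hx₃,
      mul_nonneg (mul_nonneg (mul_nonneg hb1.le (mul_nonneg hx₁ hx₁)) hx₂) ha₁₂.le,
      mul_nonneg (mul_nonneg (mul_nonneg hb1.le (mul_nonneg hx₁ hx₁)) hx₃) ha₁₃.le,
      sq_nonneg x₁]
  have t2 : 2 * b₂₂ * x₂ * F₂ x₁ x₂ x₃ ≤ -x₂ ^ 2 := by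
    rw [hF₂]
    nlinarith [mul_nonneg (mul_nonneg (mul_nonneg hb2.le (mul_nonneg hx₂ hx₂)) hx₂) hr₂.le,
      mul_nonneg (mul_nonneg (mul_nonneg hb2.le (mul_nonneg hx₂ hx₂)) hx₁) ha₂₁.le,
      sq_nonneg x₂]
  have t3 : 2 * b₃₃ * x₃ * F₃ x₁ x₂ x₃ ≤ -x₃ ^ 2 := by
    have h2b : 0 ≤ 2 * b₃₃ * x₃ := by positivity
    have hmul := mul_le_mul_of_nonneg_left hq h2b
    calc 2 * b₃₃ * x₃ * F₃ x₁ x₂ x₃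
        = 2 * b₃₃ * x₃ * (r₃ * x₁ * x₃ / (x₁ + k₃)) -
          2 * b₃₃ * x₃ * (a₃₁ * x₁ * x₃) - b₃₃ * (2 * (g₃ + d₃)) * x₃ ^ 2 := by
          rw [hF₃]; ring
      _ ≤ -x₃ ^ 2 := by rw [e3]; linarith
  have key : D x₁ x₂ x₃ ≤ -(x₁ ^ 2 + x₂ ^ 2 + x₃ ^ 2) := by
    rw [hD]; linarith
  have hsq : 0 ≤ x₁ ^ 2 + x₂ ^ 2 + x₃ ^ 2 := by positivity
  constructor
  · linarith
  · intro hne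
    have hpos : 0 < x₁ ^ 2 + x₂ ^ 2 + x₃ ^ 2 := by
      rcases lt_or_eq_of_le hx₁ with h | h
      · positivity
      rcases lt_or_eq_of_le hx₂ with h' | h'
      · positivity
      rcases lt_or_eq_of_le hx₃ with h'' | h''
      · positivity
      exact absurd ⟨h.symm, h'.symm, h''.symm⟩ hne
    linarith
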